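/- Differences of right derivatives of convex envelopes increase when the domain shrinks: for continuous f, a < ū < b, and u₁ < u₂ in [a,ū), one has (d/du conv_{[a,ū]} f)(u₂+) − (d/du conv_{[a,ū]} f)(u₁+) ≥ (d/du conv_{[a,b]} f)(u₂+) − (d/du conv_{[a,b]} f)(u₁+). -/

import Mathlib

open Set

/-- Convex envelope of `f` on `[a,b]`: pointwise supremum of all convex functions
on `[a,b]` lying below `f`. -/
noncomputable def convEnv (f : ℝ → ℝ) (a b : ℝ) (u : ℝ) : ℝ :=
  sSup {y : ℝ | ∃ g : ℝ → ℝ, ConvexOn ℝ (Set.Icc a b) g ∧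
    (∀ x ∈ Set.Icc a b, g x ≤ f x) ∧ g u = y}

namespace ConvEnvAux

variable {f : ℝ → ℝ} {a b u : ℝ}

lemma exists_lb (hf : Continuous f) (a b : ℝ) : ∃ B : ℝ, ∀ x ∈ Icc a b, B ≤ f x := by
  rcases isEmpty_or_nonempty (Icc a b) with h | h
  · exact ⟨0, fun x hx => absurd ⟨x, hx⟩ (not_nonempty_iff.2 h)⟩
  · obtain ⟨B, hB⟩ := (isCompact_Icc.image hf).bddBelow
    exact ⟨B, fun x hx => hB (mem_image_of_mem f hx)⟩

lemma cand_nonempty (hf : Continuous f) (a b u : ℝ) :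
    {y : ℝ | ∃ g : ℝ → ℝ, ConvexOn ℝ (Set.Icc a b) g ∧
      (∀ x ∈ Set.Icc a b, g x ≤ f x) ∧ g u = y}.Nonempty := by
  obtain ⟨B, hB⟩ := exists_lb hf a b
  exact ⟨B, fun _ => B, convexOn_const _ (convex_Icc a b), fun x hx => hB x hx, rfl⟩

lemma cand_bddAbove (hu : u ∈ Icc a b) :
    BddAbove {y : ℝ | ∃ g : ℝ → ℝ, ConvexOn ℝ (Set.Icc a b) g ∧
      (∀ x ∈ Set.Icc a b, g x ≤ f x) ∧ g u = y} := by
  refine ⟨f u, fun y hy => ?_⟩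
  obtain ⟨g, _, hle, rfl⟩ := hy
  exact hle u hu

lemma le_convEnv {g : ℝ → ℝ} (hg : ConvexOn ℝ (Icc a b) g)
    (hle : ∀ x ∈ Icc a b, g x ≤ f x) (hu : u ∈ Icc a b) :
    g u ≤ convEnv f a b u :=
  le_csSup (cand_bddAbove hu) ⟨g, hg, hle, rfl⟩

lemma convEnv_le (hf : Continuous f) (hu : u ∈ Icc a b) :
    convEnv f a b u ≤ f u := by
  refine csSup_le (cand_nonempty hf a b u) ?_
  rintro y ⟨g, _, hle, rfl⟩
  exact hle u hu

lemma convEnv_convexOn (hf : Continuous f) : ConvexOn ℝ (Icc a b) (convEnv f a b) := by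
  refine ⟨convex_Icc a b, fun x hx y hy p q hp hq hpq => ?_⟩
  refine csSup_le (cand_nonempty hf a b _) ?_
  rintro z ⟨g, hg, hle, rfl⟩
  calc g (p • x + q • y) ≤ p • g x + q • g y := hg.2 hx hy hp hq hpq
    _ ≤ p • convEnv f a b x + q • convEnv f a b y := by
        have h1 := le_convEnv hg hle hx
        have h2 := le_convEnv hg hle hy
        simp only [smul_eq_mul]
        have := mul_le_mul_of_nonneg_left h1 hp
        have := mul_le_mul_of_nonneg_left h2 hq
        linarith

lemma convEnv_mono_dom (hf : Continuous f) {c : ℝ} (hc : c ≤ b) (hu : u ∈ Icc a c) :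
    convEnv f a b u ≤ convEnv f a c u := by
  refine csSup_le_csSup (cand_bddAbove hu) (cand_nonempty hf a b u) ?_
  rintro y ⟨g, hg, hle, rfl⟩
  exact ⟨g, hg.subset (Icc_subset_Icc_right hc) (convex_Icc a c),
    fun x hx => hle x (Icc_subset_Icc_right hc hx), rfl⟩

lemma convEnv_apply_left (hf : Continuous f) (hab : a < b) : convEnv f a b a = f a := by
  refine le_antisymm (convEnv_le hf (left_mem_Icc.2 hab.le)) ?_
  refine le_of_forall_pos_le_add fun ε hε => ?_
  obtain ⟨B, hB⟩ := exists_lb hf a b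
  have hc : ContinuousAt f a := hf.continuousAt
  obtain ⟨δ, hδ, hδ2⟩ := Metric.continuousAt_iff.1 hc ε hε
  set M : ℝ := min 0 ((B - f a + ε) / δ) with hM
  set g : ℝ → ℝ := fun x => f a - ε + M * (x - a) with hgdef
  have hgconv : ConvexOn ℝ (Icc a b) g := by
    refine ⟨convex_Icc a b, fun x _ y _ p q hp hq hpq => ?_⟩
    simp only [hgdef, smul_eq_mul]
    have heq : f a - ε + M * (p * x + q * y - a)
        = p * (f a - ε + M * (x - a)) + q * (f a - ε + M * (y - a)) := by
      linear_combination (M * a - f a + ε) * hpq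
    exact le_of_eq heq
  have hgle : ∀ x ∈ Icc a b, g x ≤ f x := by
    intro x hx
    rcases lt_or_ge x (a + δ) with h | h
    · have hdist : dist x a < δ := by
        rw [Real.dist_eq, abs_lt]
        constructor <;> [linarith [hx.1]; linarith]
      have := hδ2 hdist
      rw [Real.dist_eq, abs_lt] at this
      have hx1 : x - a ≥ 0 := by linarith [hx.1]
      have hM0 : M ≤ 0 := min_le_left _ _
      have : M * (x - a) ≤ 0 := mul_nonpos_of_nonpos_of_nonneg hM0 hx1
      simp only [hgdef]; linarith
    · have hM0 : M ≤ (B - f a + ε) / δ := min_le_right _ _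
      have hδx : δ ≤ x - a := by linarith
      have hM0' : M ≤ 0 := min_le_left _ _
      have h1 : M * (x - a) ≤ M * δ := by nlinarith
      have h2 : M * δ ≤ B - f a + ε := by
        calc M * δ ≤ ((B - f a + ε) / δ) * δ := by nlinarith
          _ = B - f a + ε := by field_simp
      have := hB x hx
      simp only [hgdef]; linarith
  have := le_convEnv hgconv hgle (left_mem_Icc.2 hab.le)
  simp only [hgdef] at this
  simpa using this


lemma pair_min (f : ℝ → ℝ) {p q u V : ℝ} (hpq : p < q) (hup : p ≤ u) (huq : u ≤ q)
    (hval : (q - u) * f p + (u - p) * f q ≤ V * (q - p)) :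
    ∃ θ ∈ Icc (0:ℝ) 1, θ * p + (1 - θ) * q = u ∧ θ * f p + (1 - θ) * f q ≤ V := by
  have hd : 0 < q - p := by linarith
  refine ⟨(q - u) / (q - p), ⟨div_nonneg (by linarith) hd.le, (div_le_one hd).2 (by linarith)⟩,
    ?_, ?_⟩
  · field_simp
    ring
  · have h1 : (1 : ℝ) - (q - u) / (q - p) = (u - p) / (q - p) := by
      field_simp
      ring
    rw [h1, div_mul_eq_mul_div, div_mul_eq_mul_div, ← add_div, div_le_iff₀ hd]
    linarith [hval]

lemma reduce3sorted (f : ℝ → ℝ) {x₁ x₂ x₃ μ₁ μ₂ μ₃ : ℝ}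
    (hx12 : x₁ ≤ x₂) (hx23 : x₂ ≤ x₃)
    (h1 : 0 ≤ μ₁) (h2 : 0 ≤ μ₂) (h3 : 0 ≤ μ₃) (hs : μ₁ + μ₂ + μ₃ = 1) :
    ∃ p q θ, (p = x₁ ∨ p = x₂ ∨ p = x₃) ∧ (q = x₁ ∨ q = x₂ ∨ q = x₃) ∧ θ ∈ Icc (0:ℝ) 1 ∧
      θ * p + (1 - θ) * q = μ₁ * x₁ + μ₂ * x₂ + μ₃ * x₃ ∧
      θ * f p + (1 - θ) * f q ≤ μ₁ * f x₁ + μ₂ * f x₂ + μ₃ * f x₃ := by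
  have hμ1 : μ₁ = 1 - μ₂ - μ₃ := by linarith
  subst hμ1
  have hux1 : x₁ ≤ (1 - μ₂ - μ₃) * x₁ + μ₂ * x₂ + μ₃ * x₃ := by
    nlinarith [mul_nonneg h2 (sub_nonneg.2 hx12), mul_nonneg h3 (sub_nonneg.2 (hx12.trans hx23))]
  have hux3 : (1 - μ₂ - μ₃) * x₁ + μ₂ * x₂ + μ₃ * x₃ ≤ x₃ := by
    nlinarith [mul_nonneg h2 (sub_nonneg.2 hx23), mul_nonneg h1 (sub_nonneg.2 (hx12.trans hx23))]
  rcases eq_or_lt_of_le (hx12.trans hx23) with hdeg | hlt13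
  · -- x₁ = x₃ : all points equal
    have e2 : x₂ = x₁ := le_antisymm (hdeg ▸ hx23) hx12
    have e3 : x₃ = x₁ := hdeg.symm
    refine ⟨x₁, x₁, 1, Or.inl rfl, Or.inl rfl, ⟨zero_le_one, le_refl 1⟩, ?_, ?_⟩
    · rw [e2, e3]; ring
    · rw [e2, e3]; rw [show (1:ℝ) * f x₁ + (1 - 1) * f x₁
        = (1 - μ₂ - μ₃) * f x₁ + μ₂ * f x₁ + μ₃ * f x₁ by ring]
  · rcases le_or_gt ((x₃ - x₂) * f x₁ + (x₂ - x₁) * f x₃) ((x₃ - x₁) * f x₂) with hA | hB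
    · -- middle point above the chord : use pair (x₁, x₃)
      have key : ((1 - μ₂ - μ₃) * f x₁ + μ₂ * f x₂ + μ₃ * f x₃) * (x₃ - x₁)
          - ((x₃ - ((1 - μ₂ - μ₃) * x₁ + μ₂ * x₂ + μ₃ * x₃)) * f x₁
            + (((1 - μ₂ - μ₃) * x₁ + μ₂ * x₂ + μ₃ * x₃) - x₁) * f x₃)
          = μ₂ * ((x₃ - x₁) * f x₂ - ((x₃ - x₂) * f x₁ + (x₂ - x₁) * f x₃)) := by ring
      obtain ⟨θ, hθ, hcomb, hval⟩ := pair_min f hlt13 hux1 hux3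
        (by nlinarith [mul_nonneg h2 (sub_nonneg.2 hA), key])
      exact ⟨x₁, x₃, θ, Or.inl rfl, Or.inr (Or.inr rfl), hθ, hcomb, hval⟩
    · -- middle point strictly below the chord
      have h12' : x₁ < x₂ := by
        rcases eq_or_lt_of_le hx12 with rfl | h
        · nlinarith
        · exact h
      have h23' : x₂ < x₃ := by
        rcases eq_or_lt_of_le hx23 with rfl | h
        · nlinarith
        · exact h
      rcases le_total ((1 - μ₂ - μ₃) * x₁ + μ₂ * x₂ + μ₃ * x₃) x₂ with hu2 | hu2
      · have key : ((1 - μ₂ - μ₃) * f x₁ + μ₂ * f x₂ + μ₃ * f x₃) * (x₂ - x₁)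
            - ((x₂ - ((1 - μ₂ - μ₃) * x₁ + μ₂ * x₂ + μ₃ * x₃)) * f x₁
              + (((1 - μ₂ - μ₃) * x₁ + μ₂ * x₂ + μ₃ * x₃) - x₁) * f x₂)
            = μ₃ * ((x₃ - x₂) * f x₁ + (x₂ - x₁) * f x₃ - (x₃ - x₁) * f x₂) := by ring
        obtain ⟨θ, hθ, hcomb, hval⟩ := pair_min f h12' hux1 hu2
          (by nlinarith [mul_nonneg h3 (by nlinarith :
            (0:ℝ) ≤ (x₃ - x₂) * f x₁ + (x₂ - x₁) * f x₃ - (x₃ - x₁) * f x₂), key])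
        exact ⟨x₁, x₂, θ, Or.inl rfl, Or.inr (Or.inl rfl), hθ, hcomb, hval⟩
      · have key : ((1 - μ₂ - μ₃) * f x₁ + μ₂ * f x₂ + μ₃ * f x₃) * (x₃ - x₂)
            - ((x₃ - ((1 - μ₂ - μ₃) * x₁ + μ₂ * x₂ + μ₃ * x₃)) * f x₂
              + (((1 - μ₂ - μ₃) * x₁ + μ₂ * x₂ + μ₃ * x₃) - x₂) * f x₃)
            = (1 - μ₂ - μ₃) * ((x₃ - x₂) * f x₁ + (x₂ - x₁) * f x₃ - (x₃ - x₁) * f x₂) := by ring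
        obtain ⟨θ, hθ, hcomb, hval⟩ := pair_min f h23' hu2 hux3
          (by nlinarith [mul_nonneg h1 (by nlinarith :
            (0:ℝ) ≤ (x₃ - x₂) * f x₁ + (x₂ - x₁) * f x₃ - (x₃ - x₁) * f x₂), key])
        exact ⟨x₂, x₃, θ, Or.inr (Or.inl rfl), Or.inr (Or.inr rfl), hθ, hcomb, hval⟩

lemma reduce3 (f : ℝ → ℝ) {x₁ x₂ x₃ μ₁ μ₂ μ₃ : ℝ}
    (h1 : 0 ≤ μ₁) (h2 : 0 ≤ μ₂) (h3 : 0 ≤ μ₃) (hs : μ₁ + μ₂ + μ₃ = 1) :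
    ∃ p q θ, (p = x₁ ∨ p = x₂ ∨ p = x₃) ∧ (q = x₁ ∨ q = x₂ ∨ q = x₃) ∧ θ ∈ Icc (0:ℝ) 1 ∧
      θ * p + (1 - θ) * q = μ₁ * x₁ + μ₂ * x₂ + μ₃ * x₃ ∧
      θ * f p + (1 - θ) * f q ≤ μ₁ * f x₁ + μ₂ * f x₂ + μ₃ * f x₃ := by
  rcases le_total x₁ x₂ with a12 | a12 <;> rcases le_total x₂ x₃ with a23 | a23 <;>
    rcases le_total x₁ x₃ with a13 | a13
  · obtain ⟨p, q, θ, hp, hq, hθ, hc, hv⟩ := reduce3sorted f a12 a23 h1 h2 h3 hs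
    exact ⟨p, q, θ, by tauto, by tauto, hθ, by linarith, by linarith⟩
  · obtain ⟨p, q, θ, hp, hq, hθ, hc, hv⟩ := reduce3sorted f a12 a23 h1 h2 h3 hs
    exact ⟨p, q, θ, by tauto, by tauto, hθ, by linarith, by linarith⟩
  · obtain ⟨p, q, θ, hp, hq, hθ, hc, hv⟩ := reduce3sorted f a13 a23 h1 h3 h2 (by linarith)
    exact ⟨p, q, θ, by tauto, by tauto, hθ, by linarith, by linarith⟩
  · obtain ⟨p, q, θ, hp, hq, hθ, hc, hv⟩ := reduce3sorted f a13 a12 h3 h1 h2 (by linarith)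
    exact ⟨p, q, θ, by tauto, by tauto, hθ, by linarith, by linarith⟩
  · obtain ⟨p, q, θ, hp, hq, hθ, hc, hv⟩ := reduce3sorted f a12 a13 h2 h1 h3 (by linarith)
    exact ⟨p, q, θ, by tauto, by tauto, hθ, by linarith, by linarith⟩
  · obtain ⟨p, q, θ, hp, hq, hθ, hc, hv⟩ := reduce3sorted f a23 a13 h2 h3 h1 (by linarith)
    exact ⟨p, q, θ, by tauto, by tauto, hθ, by linarith, by linarith⟩
  · obtain ⟨p, q, θ, hp, hq, hθ, hc, hv⟩ := reduce3sorted f a23 a12 h3 h2 h1 (by linarith)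
    exact ⟨p, q, θ, by tauto, by tauto, hθ, by linarith, by linarith⟩
  · obtain ⟨p, q, θ, hp, hq, hθ, hc, hv⟩ := reduce3sorted f a23 a12 h3 h2 h1 (by linarith)
    exact ⟨p, q, θ, by tauto, by tauto, hθ, by linarith, by linarith⟩

lemma reduceFin (f : ℝ → ℝ) {a b : ℝ} {ι : Type} (t : Finset ι) (w x : ι → ℝ)
    (hw : ∀ i ∈ t, 0 ≤ w i) (hs : ∑ i ∈ t, w i = 1) (hx : ∀ i ∈ t, x i ∈ Icc a b) :
    ∃ p q θ, p ∈ Icc a b ∧ q ∈ Icc a b ∧ θ ∈ Icc (0:ℝ) 1 ∧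
      θ * p + (1 - θ) * q = ∑ i ∈ t, w i * x i ∧
      θ * f p + (1 - θ) * f q ≤ ∑ i ∈ t, w i * f (x i) := by
  classical
  induction t using Finset.induction_on generalizing w with
  | empty => simp at hs
  | @insert i₀ s hi₀ ih =>
    rw [Finset.sum_insert hi₀] at hs
    rw [Finset.sum_insert hi₀, Finset.sum_insert hi₀]
    have hmem₀ : x i₀ ∈ Icc a b := hx i₀ (Finset.mem_insert_self _ _)
    have hw₀ : 0 ≤ w i₀ := hw i₀ (Finset.mem_insert_self _ _)
    have hws : ∀ i ∈ s, 0 ≤ w i := fun i hi => hw i (Finset.mem_insert_of_mem hi)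
    have hxs : ∀ i ∈ s, x i ∈ Icc a b := fun i hi => hx i (Finset.mem_insert_of_mem hi)
    have hα0 : 0 ≤ ∑ i ∈ s, w i := Finset.sum_nonneg hws
    rcases eq_or_lt_of_le hα0 with hα0' | hαpos
    · have hzero : ∀ i ∈ s, w i = 0 := (Finset.sum_eq_zero_iff_of_nonneg hws).1 hα0'.symm
      have hx0 : ∑ i ∈ s, w i * x i = 0 :=
        Finset.sum_eq_zero fun i hi => by rw [hzero i hi, zero_mul]
      have hf0 : ∑ i ∈ s, w i * f (x i) = 0 :=
        Finset.sum_eq_zero fun i hi => by rw [hzero i hi, zero_mul]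
      have hw1 : w i₀ = 1 := by rw [← hα0'] at hs; linarith
      refine ⟨x i₀, x i₀, 1, hmem₀, hmem₀, ⟨zero_le_one, le_rfl⟩, ?_, ?_⟩
      · rw [hx0, hw1]; ring
      · rw [hf0, hw1]; exact le_of_eq (by ring)
    · set α := ∑ i ∈ s, w i with hα
      obtain ⟨p, q, θ, hp, hq, hθ, hcomb, hval⟩ := ih (fun i => w i / α)
        (fun i hi => div_nonneg (hws i hi) hα0)
        (by rw [← Finset.sum_div]; field_simp; exact hα.symm) hxs
      have hpmem : p ∈ Icc a b := hp
      have hcs : α * (θ * p + (1 - θ) * q) = ∑ i ∈ s, w i * x i := by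
        rw [hcomb, Finset.mul_sum]
        refine Finset.sum_congr rfl fun i hi => ?_
        field_simp
      have hvs : α * (θ * f p + (1 - θ) * f q) ≤ ∑ i ∈ s, w i * f (x i) := by
        calc α * (θ * f p + (1 - θ) * f q) ≤ α * (∑ i ∈ s, (w i / α) * f (x i)) :=
              mul_le_mul_of_nonneg_left hval hα0
          _ = ∑ i ∈ s, w i * f (x i) := by
              rw [Finset.mul_sum]
              refine Finset.sum_congr rfl fun i hi => ?_
              field_simp
      have hθ0 : 0 ≤ α * θ := mul_nonneg hα0 hθ.1
      have hθ1 : 0 ≤ α * (1 - θ) := mul_nonneg hα0 (by linarith [hθ.2])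
      obtain ⟨p', q', θ', hp', hq', hθ', hcomb', hval'⟩ :=
        reduce3 f (x₁ := x i₀) (x₂ := p) (x₃ := q) hw₀ hθ0 hθ1 (by linarith)
      have hp'mem : p' ∈ Icc a b := by rcases hp' with rfl | rfl | rfl <;> assumption
      have hq'mem : q' ∈ Icc a b := by rcases hq' with rfl | rfl | rfl <;> assumption
      refine ⟨p', q', θ', hp'mem, hq'mem, hθ', ?_, ?_⟩
      · have : α * θ * p + α * (1 - θ) * q = α * (θ * p + (1 - θ) * q) := by ring
        linarith [hcomb', hcs, this]
      · have : α * θ * f p + α * (1 - θ) * f q = α * (θ * f p + (1 - θ) * f q) := by ring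
        linarith [hval', hvs, this]

def Kset (a b u : ℝ) : Set (ℝ × ℝ × ℝ) :=
  {v | v.1 ∈ Icc a b ∧ v.2.1 ∈ Icc a b ∧ v.2.2 ∈ Icc (0:ℝ) 1 ∧
    v.2.2 * v.1 + (1 - v.2.2) * v.2.1 = u}

noncomputable def cval (f : ℝ → ℝ) (v : ℝ × ℝ × ℝ) : ℝ :=
  v.2.2 * f v.1 + (1 - v.2.2) * f v.2.1

noncomputable def Emin (f : ℝ → ℝ) (a b u : ℝ) : ℝ := sInf (cval f '' Kset a b u)

lemma self_mem_Kset (hu : u ∈ Icc a b) : (u, u, 1) ∈ Kset a b u :=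
  ⟨hu, hu, ⟨zero_le_one, le_rfl⟩, by ring⟩

lemma cval_lb (hf : Continuous f) : ∃ B : ℝ, ∀ u : ℝ, ∀ v ∈ Kset a b u, B ≤ cval f v := by
  obtain ⟨B, hB⟩ := exists_lb hf a b
  refine ⟨B, fun u v hv => ?_⟩
  obtain ⟨h1, h2, hθ, -⟩ := hv
  have b1 := hB _ h1
  have b2 := hB _ h2
  have := hθ.1; have := hθ.2
  unfold cval
  nlinarith [mul_nonneg hθ.1 (sub_nonneg.2 b1), mul_nonneg (by linarith [hθ.2] : (0:ℝ) ≤ 1 - v.2.2) (sub_nonneg.2 b2)]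

lemma cval_bddBelow (hf : Continuous f) : BddBelow (cval f '' Kset a b u) := by
  obtain ⟨B, hB⟩ := cval_lb (a := a) (b := b) hf
  exact ⟨B, by rintro y ⟨v, hv, rfl⟩; exact hB u v hv⟩

lemma Emin_le (hf : Continuous f) {v : ℝ × ℝ × ℝ} (hv : v ∈ Kset a b u) :
    Emin f a b u ≤ cval f v :=
  csInf_le (cval_bddBelow hf) (mem_image_of_mem _ hv)

lemma Emin_le_f (hf : Continuous f) (hu : u ∈ Icc a b) : Emin f a b u ≤ f u := by
  have := Emin_le hf (self_mem_Kset hu)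
  unfold cval at this
  simpa using this

lemma Kset_isCompact : IsCompact (Kset a b u) := by
  have heq : Kset a b u = (Icc a b ×ˢ Icc a b ×ˢ Icc (0:ℝ) 1) ∩
      {v : ℝ × ℝ × ℝ | v.2.2 * v.1 + (1 - v.2.2) * v.2.1 = u} := by
    ext v
    simp only [Kset, mem_inter_iff, mem_prod, mem_setOf_eq]
    tauto
  rw [heq]
  exact ((isCompact_Icc.prod (isCompact_Icc.prod isCompact_Icc)).inter_right
    (isClosed_eq (by fun_prop) continuous_const))

lemma cval_continuous (hf : Continuous f) : Continuous (cval f) := by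
  unfold cval; fun_prop

lemma exists_minimizer (hf : Continuous f) (hu : u ∈ Icc a b) :
    ∃ v ∈ Kset a b u, Emin f a b u = cval f v := by
  obtain ⟨v, hv, hmin⟩ := Kset_isCompact.exists_isMinOn ⟨_, self_mem_Kset hu⟩
    (cval_continuous hf).continuousOn
  refine ⟨v, hv, le_antisymm (Emin_le hf hv) ?_⟩
  refine le_csInf ⟨_, mem_image_of_mem _ (self_mem_Kset hu)⟩ ?_
  rintro y ⟨w, hw, rfl⟩
  exact hmin hw

lemma Emin_convexOn (hf : Continuous f) : ConvexOn ℝ (Icc a b) (Emin f a b) := by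
  refine ⟨convex_Icc a b, fun v₁ hv₁ v₂ hv₂ lp lq hlp hlq hlpq => ?_⟩
  obtain ⟨m₁, hm₁, he₁⟩ := exists_minimizer hf hv₁
  obtain ⟨m₂, hm₂, he₂⟩ := exists_minimizer hf hv₂
  obtain ⟨p₁, q₁, θ₁⟩ := m₁
  obtain ⟨p₂, q₂, θ₂⟩ := m₂
  obtain ⟨hp₁, hq₁, hθ₁, hc₁⟩ := hm₁
  obtain ⟨hp₂, hq₂, hθ₂, hc₂⟩ := hm₂
  simp only at hp₁ hq₁ hθ₁ hc₁ hp₂ hq₂ hθ₂ hc₂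
  obtain ⟨p, q, θ, hp, hq, hθ, hcomb, hval⟩ := reduceFin f (Finset.univ : Finset (Fin 4))
    ![lp * θ₁, lp * (1 - θ₁), lq * θ₂, lq * (1 - θ₂)] ![p₁, q₁, p₂, q₂]
    (fun i _ => by
      fin_cases i <;> simp
      · exact mul_nonneg hlp hθ₁.1
      · exact mul_nonneg hlp (by linarith [hθ₁.2])
      · exact mul_nonneg hlq hθ₂.1
      · exact mul_nonneg hlq (by linarith [hθ₂.2]))
    (by rw [Fin.sum_univ_four]; simp; linear_combination hlpq)
    (fun i _ => by fin_cases i <;> simpa)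
  rw [Fin.sum_univ_four] at hcomb hval
  simp only [Matrix.cons_val_zero, Matrix.cons_val_one, Matrix.head_cons,
    Matrix.cons_val_two, Matrix.tail_cons, Matrix.cons_val_three] at hcomb hval
  have hmem : (p, q, θ) ∈ Kset a b (lp * v₁ + lq * v₂) := by
    refine ⟨hp, hq, hθ, ?_⟩
    rw [hcomb]
    linear_combination lp * hc₁ + lq * hc₂
  have hfin := Emin_le hf hmem
  unfold cval at hfin he₁ he₂
  simp only at he₁ he₂
  simp only [smul_eq_mul]
  calc Emin f a b (lp * v₁ + lq * v₂) ≤ θ * f p + (1 - θ) * f q := hfin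
    _ ≤ lp * θ₁ * f p₁ + lp * (1 - θ₁) * f q₁ + lq * θ₂ * f p₂ + lq * (1 - θ₂) * f q₂ := hval
    _ = lp * Emin f a b v₁ + lq * Emin f a b v₂ := by rw [he₁, he₂]; ring

lemma convEnv_eq_Emin (hf : Continuous f) (hu : u ∈ Icc a b) :
    convEnv f a b u = Emin f a b u := by
  refine le_antisymm ?_ ?_
  · refine csSup_le (cand_nonempty hf a b u) ?_
    rintro y ⟨g, hg, hle, rfl⟩
    refine le_csInf ⟨_, mem_image_of_mem _ (self_mem_Kset hu)⟩ ?_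
    rintro z ⟨⟨p', q', θ'⟩, ⟨hp', hq', hθ', hc'⟩, rfl⟩
    simp only at hp' hq' hθ' hc'
    have h2 := hg.2 hp' hq' hθ'.1 (by linarith [hθ'.2] : (0:ℝ) ≤ 1 - θ') (by ring)
    simp only [smul_eq_mul] at h2
    rw [hc'] at h2
    unfold cval
    simp only
    calc g u ≤ θ' * g p' + (1 - θ') * g q' := h2
      _ ≤ θ' * f p' + (1 - θ') * f q' := by
          have := hle p' hp'
          have := hle q' hq'
          have := hθ'.1
          have h1θ : (0:ℝ) ≤ 1 - θ' := by linarith [hθ'.2]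
          nlinarith [mul_nonneg hθ'.1 (sub_nonneg.2 (hle p' hp')),
            mul_nonneg h1θ (sub_nonneg.2 (hle q' hq'))]
  · exact le_convEnv (Emin_convexOn hf) (fun x hx => Emin_le_f hf hx) hu

lemma exists_support_line {F : ℝ → ℝ} (hF : ConvexOn ℝ (Icc a b) F) (hu : u ∈ Ioo a b) :
    ∃ c : ℝ, ∀ x ∈ Icc a b, F u + c * (x - u) ≤ F x := by
  have hab : a ≤ b := hu.1.le.trans hu.2.le
  have humem : u ∈ Icc a b := Ioo_subset_Icc_self hu
  have hamem : a ∈ Icc a b := left_mem_Icc.2 hab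
  set Sr := (fun t => (F t - F u) / (t - u)) '' Ioc u b with hSr
  have hne : Sr.Nonempty := ⟨_, mem_image_of_mem _ (right_mem_Ioc.2 hu.2)⟩
  have hlower : ∀ x ∈ Icc a b, x < u → ∀ y ∈ Sr, (F x - F u) / (x - u) ≤ y := by
    rintro x hx hxu y ⟨t, ht, rfl⟩
    have htmem : t ∈ Icc a b := ⟨(hu.1.trans ht.1).le, ht.2⟩
    exact hF.secant_mono humem hx htmem hxu.ne ht.1.ne' (hxu.le.trans ht.1.le)
  have hbdd : BddBelow Sr := ⟨(F a - F u) / (a - u), fun y hy => hlower a hamem hu.1 y hy⟩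
  refine ⟨sInf Sr, fun x hx => ?_⟩
  rcases lt_trichotomy x u with hxu | rfl | hxu
  · have h1 : (F x - F u) / (x - u) ≤ sInf Sr := le_csInf hne (hlower x hx hxu)
    have hneg : x - u < 0 := by linarith
    rw [div_le_iff_of_neg hneg] at h1
    linarith
  · simp
  · have h1 : sInf Sr ≤ (F x - F u) / (x - u) :=
      csInf_le hbdd (mem_image_of_mem _ ⟨hxu, hx.2⟩)
    have hpos : 0 < x - u := by linarith
    rw [le_div_iff₀ hpos] at h1
    linarith

lemma affine_piece {F : ℝ → ℝ} (hF : ConvexOn ℝ (Icc a b) F) {p q c u : ℝ}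
    (hp : p ∈ Icc a b) (hq : q ∈ Icc a b) (hpq : p < q)
    (hsupp : ∀ x ∈ Icc a b, F u + c * (x - u) ≤ F x)
    (hFp : F p = F u + c * (p - u)) (hFq : F q = F u + c * (q - u)) :
    ∀ t ∈ Icc p q, F t = F u + c * (t - u) := by
  intro t ht
  have htm : t ∈ Icc a b := ⟨hp.1.trans ht.1, ht.2.trans hq.2⟩
  have hd : 0 < q - p := by linarith
  have hs0 : 0 ≤ (q - t) / (q - p) := div_nonneg (by linarith [ht.2]) hd.le
  have hs1 : (q - t) / (q - p) ≤ 1 := (div_le_one hd).2 (by linarith [ht.1])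
  have hcombo : ((q - t) / (q - p)) * p + (1 - (q - t) / (q - p)) * q = t := by
    field_simp
    ring
  have h2 : F (((q - t) / (q - p)) * p + (1 - (q - t) / (q - p)) * q)
      ≤ ((q - t) / (q - p)) * F p + (1 - (q - t) / (q - p)) * F q := by
    have := hF.2 hp hq hs0 (by linarith : (0:ℝ) ≤ 1 - (q - t) / (q - p))
      (by ring : (q - t) / (q - p) + (1 - (q - t) / (q - p)) = 1)
    simpa [smul_eq_mul] using this
  rw [hcombo] at h2
  refine le_antisymm ?_ (hsupp t htm)
  calc F t ≤ ((q - t) / (q - p)) * F p + (1 - (q - t) / (q - p)) * F q := h2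
    _ = F u + c * (t - u) := by rw [hFp, hFq]; linear_combination c * hcombo

lemma envelope_structure (hf : Continuous f) {u : ℝ} (hu : u ∈ Ioo a b)
    (hlt : convEnv f a b u < f u) :
    ∃ p q c, p ∈ Icc a b ∧ q ∈ Icc a b ∧ p < u ∧ u < q ∧
      convEnv f a b p = f p ∧ convEnv f a b q = f q ∧
      (∀ t ∈ Icc p q, convEnv f a b t = convEnv f a b u + c * (t - u)) := by
  have hab : a ≤ b := hu.1.le.trans hu.2.le
  have humem : u ∈ Icc a b := Ioo_subset_Icc_self hu
  set F := convEnv f a b with hFdef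
  have hFconv : ConvexOn ℝ (Icc a b) F := convEnv_convexOn hf
  have hFle : ∀ x ∈ Icc a b, F x ≤ f x := fun x hx => convEnv_le hf hx
  obtain ⟨⟨x, y, θ⟩, ⟨hx, hy, hθ, hcomb⟩, hmin⟩ := exists_minimizer hf humem
  simp only at hx hy hθ hcomb
  have hFu : F u = θ * f x + (1 - θ) * f y := by
    rw [hFdef, convEnv_eq_Emin hf humem, hmin]; rfl
  obtain ⟨c, hsupp⟩ := exists_support_line hFconv hu
  have hMx : F u + c * (x - u) ≤ F x := hsupp x hx
  have hMy : F u + c * (y - u) ≤ F y := hsupp y hy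
  have hsum : θ * (f x - (F u + c * (x - u))) + (1 - θ) * (f y - (F u + c * (y - u))) = 0 := by
    linear_combination -hFu - c * hcomb
  have ht1 : 0 ≤ θ * (f x - (F u + c * (x - u))) :=
    mul_nonneg hθ.1 (by linarith [hMx, hFle x hx])
  have ht2 : 0 ≤ (1 - θ) * (f y - (F u + c * (y - u))) :=
    mul_nonneg (by linarith [hθ.2]) (by linarith [hMy, hFle y hy])
  have hθpos : 0 < θ := by
    rcases eq_or_lt_of_le hθ.1 with h0 | h0
    · exfalso
      rw [← h0] at hcomb hFu
      have huy : y = u := by linear_combination hcomb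
      have hFfy : F u = f y := by linear_combination hFu
      rw [huy] at hFfy
      linarith
    · exact h0
  have hθlt1 : θ < 1 := by
    rcases eq_or_lt_of_le hθ.2 with h0 | h0
    · exfalso
      rw [h0] at hcomb hFu
      have hux : x = u := by linear_combination hcomb
      have hFfx : F u = f x := by linear_combination hFu
      rw [hux] at hFfx
      linarith
    · exact h0
  have hz1 : θ * (f x - (F u + c * (x - u))) = 0 := by linarith
  have hz2 : (1 - θ) * (f y - (F u + c * (y - u))) = 0 := by linarith
  have hfx : f x = F u + c * (x - u) := by
    rcases mul_eq_zero.1 hz1 with h | h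
    · exact absurd h hθpos.ne'
    · linarith
  have hfy : f y = F u + c * (y - u) := by
    rcases mul_eq_zero.1 hz2 with h | h
    · exact absurd h (by linarith : (1:ℝ) - θ ≠ 0)
    · linarith
  have hFx : F x = F u + c * (x - u) := le_antisymm (hfx ▸ hFle x hx) hMx
  have hFy : F y = F u + c * (y - u) := le_antisymm (hfy ▸ hFle y hy) hMy
  have hxy : x ≠ y := by
    intro h
    rw [h] at hcomb hFu
    have huy : y = u := by linear_combination hcomb
    have hFfy : F u = f y := by linear_combination hFu
    rw [huy] at hFfy
    linarith
  rcases hxy.lt_or_gt with hlt' | hlt'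
  · have hpu : x < u := by
      have e : u - x = (1 - θ) * (y - x) := by linear_combination -hcomb
      nlinarith [mul_pos (by linarith : (0:ℝ) < 1 - θ) (by linarith : (0:ℝ) < y - x)]
    have huq : u < y := by
      have e : y - u = θ * (y - x) := by linear_combination hcomb
      nlinarith [mul_pos hθpos (by linarith : (0:ℝ) < y - x)]
    exact ⟨x, y, c, hx, hy, hpu, huq, hFx.trans hfx.symm, hFy.trans hfy.symm,
      affine_piece hFconv hx hy hlt' hsupp hFx hFy⟩
  · have hpu : y < u := by
      have e : u - y = θ * (x - y) := by linear_combination -hcomb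
      nlinarith [mul_pos hθpos (by linarith : (0:ℝ) < x - y)]
    have huq : u < x := by
      have e : x - u = (1 - θ) * (x - y) := by linear_combination hcomb
      nlinarith [mul_pos (by linarith : (0:ℝ) < 1 - θ) (by linarith : (0:ℝ) < x - y)]
    exact ⟨y, x, c, hy, hx, hpu, huq, hFy.trans hfy.symm, hFx.trans hfx.symm,
      affine_piece hFconv hy hx hlt' hsupp hFy hFx⟩

section Helpers

variable {G : ℝ → ℝ} {A B : ℝ}

lemma hasDerivWithinAt_rightDeriv (hG : ConvexOn ℝ (Icc A B) G)
    (hu : u ∈ Ico A B)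
    (hbdd : BddBelow ((fun t => (G t - G u) / (t - u)) '' Ioc u B)) :
    HasDerivWithinAt G (sInf ((fun t => (G t - G u) / (t - u)) '' Ioc u B)) (Ici u) u := by
  have humem : u ∈ Icc A B := ⟨hu.1, hu.2.le⟩
  have hne : ((fun t => (G t - G u) / (t - u)) '' Ioc u B).Nonempty :=
    ⟨_, mem_image_of_mem _ (right_mem_Ioc.2 hu.2)⟩
  rw [hasDerivWithinAt_iff_tendsto_slope, Ici_sdiff_left, tendsto_order]
  constructor
  · intro c hc
    filter_upwards [Ioo_mem_nhdsGT_of_mem (⟨le_refl u, hu.2⟩ : u ∈ Ico u B)] with t ht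
    have hmem : (G t - G u) / (t - u) ∈ (fun t => (G t - G u) / (t - u)) '' Ioc u B :=
      mem_image_of_mem _ ⟨ht.1, ht.2.le⟩
    have := csInf_le hbdd hmem
    rw [slope_def_field]
    linarith [hc]
  · intro c hc
    obtain ⟨y, ⟨t₀, ht₀, rfl⟩, hy⟩ := exists_lt_of_csInf_lt hne hc
    filter_upwards [Ioo_mem_nhdsGT_of_mem (⟨le_refl u, ht₀.1⟩ : u ∈ Ico u t₀)] with t ht
    have htmem : t ∈ Icc A B := ⟨hu.1.trans ht.1.le, (ht.2.trans_le ht₀.2).le⟩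
    have ht₀mem : t₀ ∈ Icc A B := ⟨hu.1.trans ht₀.1.le, ht₀.2⟩
    have := hG.secant_mono humem htmem ht₀mem ht.1.ne' ht₀.1.ne' (ht.2.le)
    rw [slope_def_field]
    linarith

lemma derivWithin_congr_right {F G : ℝ → ℝ} {u v : ℝ} (huv : u < v)
    (h : ∀ t ∈ Ico u v, F t = G t) :
    derivWithin F (Ici u) u = derivWithin G (Ici u) u := by
  apply Filter.EventuallyEq.derivWithin_eq _ (h u ⟨le_rfl, huv⟩)
  filter_upwards [mem_nhdsWithin_of_mem_nhds (Iio_mem_nhds huv), self_mem_nhdsWithin] with t h1 h2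
  exact h t ⟨h2, h1⟩

lemma derivWithin_affine_piece {F : ℝ → ℝ} {u v k c w : ℝ} (huv : u < v)
    (h : ∀ t ∈ Ico u v, F t = k + c * (t - w)) : derivWithin F (Ici u) u = c := by
  have h1 : derivWithin F (Ici u) u = derivWithin (fun t => k + c * (t - w)) (Ici u) u :=
    derivWithin_congr_right huv h
  rw [h1]
  have h2 : HasDerivWithinAt (fun t => k + c * (t - w)) c (Ici u) u := by
    have := (((hasDerivWithinAt_id u (Ici u)).sub_const w).const_mul c).const_add k
    simpa using this
  exact h2.derivWithin (uniqueDiffOn_Ici u u self_mem_Ici)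

lemma convex_combo_le (hG : ConvexOn ℝ (Icc A B) G) {p r t : ℝ}
    (hp : p ∈ Icc A B) (hr : r ∈ Icc A B) (hpr : p < r) (ht : t ∈ Icc p r) :
    G t ≤ ((r - t) / (r - p)) * G p + (1 - (r - t) / (r - p)) * G r := by
  have hd : 0 < r - p := by linarith
  have hs0 : 0 ≤ (r - t) / (r - p) := div_nonneg (by linarith [ht.2]) hd.le
  have hs1 : (r - t) / (r - p) ≤ 1 := (div_le_one hd).2 (by linarith [ht.1])
  have hcombo : ((r - t) / (r - p)) * p + (1 - (r - t) / (r - p)) * r = t := by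
    field_simp
    ring
  have h2 := hG.2 hp hr hs0 (by linarith : (0:ℝ) ≤ 1 - (r - t) / (r - p))
    (by ring : (r - t) / (r - p) + (1 - (r - t) / (r - p)) = 1)
  simp only [smul_eq_mul] at h2
  rw [hcombo] at h2
  exact h2

end Helpers

lemma env_eq_on_left (hf : Continuous f) {u₀ : ℝ} (h1 : a < u₀) (h2 : u₀ < b) {w : ℝ}
    (hw : w ∈ Icc a u₀) (hcontact : convEnv f a b w = f w) :
    ∀ t ∈ Icc a w, convEnv f a b t = convEnv f a u₀ t := by
  intro t ht
  set F := convEnv f a b with hFdef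
  set G := convEnv f a u₀ with hGdef
  have hab : a < b := h1.trans h2
  have htu₀ : t ∈ Icc a u₀ := ⟨ht.1, ht.2.trans hw.2⟩
  have htb : t ∈ Icc a b := ⟨ht.1, htu₀.2.trans h2.le⟩
  have hFleG : F t ≤ G t := convEnv_mono_dom hf h2.le htu₀
  have hGlef : ∀ s ∈ Icc a u₀, G s ≤ f s := fun s hs => convEnv_le hf hs
  have hFlef : ∀ s ∈ Icc a b, F s ≤ f s := fun s hs => convEnv_le hf hs
  rcases eq_or_lt_of_le ht.1 with rfl | hta
  · rw [hFdef, hGdef, convEnv_apply_left hf hab, convEnv_apply_left hf h1]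
  · rcases eq_or_lt_of_le (hFlef t htb) with hFt | hFt
    · exact le_antisymm hFleG (by rw [hFt]; exact hGlef t htu₀)
    · -- F t < f t : structure lemma
      have htIoo : t ∈ Ioo a b := ⟨hta, lt_of_le_of_lt htu₀.2 h2⟩
      obtain ⟨p, q, c, hp, hq, hpt, htq, hcp, hcq, haff⟩ := envelope_structure hf htIoo hFt
      simp only [← hFdef] at hcp hcq haff
      -- the second anchor point : q if q ≤ u₀, else w
      have htw : t < w := by
        rcases eq_or_lt_of_le ht.2 with rfl | h
        · exact absurd hcontact hFt.ne
        · exact h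
      have hppos : p ∈ Icc a u₀ := ⟨hp.1, (hpt.trans htw).le.trans hw.2⟩
      have hGFp : G p = F p := by
        refine le_antisymm ?_ (convEnv_mono_dom hf h2.le hppos)
        rw [hcp]
        exact hGlef p hppos
      rcases le_or_gt q u₀ with hqu₀ | hqu₀
      · -- use interval [p, q]
        have hqpos : q ∈ Icc a u₀ := ⟨hq.1, hqu₀⟩
        have hGFq : G q = F q := by
          refine le_antisymm ?_ (convEnv_mono_dom hf h2.le hqpos)
          rw [hcq]
          exact hGlef q hqpos
        have hGt := convex_combo_le (convEnv_convexOn hf (b := u₀)) hppos hqpos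
          (hpt.trans htq) ⟨hpt.le, htq.le⟩
        rw [← hGdef] at hGt
        rw [hGFp, hGFq] at hGt
        have hFt' : F t = ((q - t) / (q - p)) * F p + (1 - (q - t) / (q - p)) * F q := by
          have e1 := haff t ⟨hpt.le, htq.le⟩
          have e2 := haff p ⟨le_rfl, (hpt.trans htq).le⟩
          have e3 := haff q ⟨(hpt.trans htq).le, le_rfl⟩
          have hcombo : ((q - t) / (q - p)) * p + (1 - (q - t) / (q - p)) * q = t := by
            have hd : 0 < q - p := by linarith [hpt, htq]
            field_simp
            ring
          rw [e1, e2, e3]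
          linear_combination (-c) * hcombo
        rw [← hFt'] at hGt
        exact le_antisymm hFleG hGt
      · -- use interval [p, w] ; note w < q and w is a contact point of F
        have hwq : w ∈ Icc p q := ⟨(hpt.trans htw).le, (lt_of_le_of_lt hw.2 hqu₀).le⟩
        have hGFw : G w = F w := by
          refine le_antisymm ?_ (convEnv_mono_dom hf h2.le hw)
          rw [hcontact]
          exact hGlef w hw
        have hGt := convex_combo_le (convEnv_convexOn hf (b := u₀)) hppos hw
          (hpt.trans htw) ⟨hpt.le, htw.le⟩
        rw [← hGdef] at hGt
        rw [hGFp, hGFw] at hGt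
        have hFt' : F t = ((w - t) / (w - p)) * F p + (1 - (w - t) / (w - p)) * F w := by
          have e1 := haff t ⟨hpt.le, htq.le⟩
          have e2 := haff p ⟨le_rfl, (hpt.trans htq).le⟩
          have e3 := haff w hwq
          have hcombo : ((w - t) / (w - p)) * p + (1 - (w - t) / (w - p)) * w = t := by
            have hd : 0 < w - p := by linarith [hpt, htw]
            field_simp
            ring
          rw [e1, e2, e3]
          linear_combination (-c) * hcombo
        rw [← hFt'] at hGt
        exact le_antisymm hFleG hGt

end ConvEnvAux

open ConvEnvAux

theorem convEnv_rightDeriv_diff_ge_of_shrink (f : ℝ → ℝ) (a b u₀ u₁ u₂ : ℝ)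
    (hf : Continuous f) (h1 : a < u₀) (h2 : u₀ < b)
    (hu₁ : u₁ ∈ Set.Ico a u₀) (hu₂ : u₂ ∈ Set.Ico a u₀) (h12 : u₁ < u₂) :
    derivWithin (convEnv f a b) (Set.Ici u₂) u₂ -
        derivWithin (convEnv f a b) (Set.Ici u₁) u₁ ≤
      derivWithin (convEnv f a u₀) (Set.Ici u₂) u₂ -
        derivWithin (convEnv f a u₀) (Set.Ici u₁) u₁ := by
  have hab : a < b := h1.trans h2
  have hu₀b : u₀ ∈ Icc a b := ⟨h1.le, h2.le⟩
  rcases eq_or_lt_of_le (convEnv_le hf hu₀b) with heq | hlt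
  · -- the envelopes agree on [a, u₀]
    have hall := env_eq_on_left hf h1 h2 (right_mem_Icc.2 h1.le) heq
    rw [derivWithin_congr_right hu₂.2 (fun t ht => hall t ⟨hu₂.1.trans ht.1, ht.2.le⟩),
        derivWithin_congr_right hu₁.2 (fun t ht => hall t ⟨hu₁.1.trans ht.1, ht.2.le⟩)]
  · obtain ⟨p, r, c, hp, hr, hpu₀, hu₀r, hcp, hcr, haff⟩ :=
      envelope_structure hf (⟨h1, h2⟩ : u₀ ∈ Ioo a b) hlt
    have hpmem : p ∈ Icc a u₀ := ⟨hp.1, hpu₀.le⟩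
    have hagree := env_eq_on_left hf h1 h2 hpmem hcp
    have Gconv : ConvexOn ℝ (Icc a u₀) (convEnv f a u₀) := convEnv_convexOn hf
    have GgeF : ∀ s ∈ Icc a u₀, convEnv f a b s ≤ convEnv f a u₀ s :=
      fun s hs => convEnv_mono_dom hf h2.le hs
    rcases lt_or_ge u₂ p with hu₂p | hpu₂
    · -- both u₁ < u₂ < p : the envelopes agree near both points
      rw [derivWithin_congr_right hu₂p (fun t ht => hagree t ⟨hu₂.1.trans ht.1, ht.2.le⟩),
          derivWithin_congr_right (h12.trans hu₂p)
            (fun t ht => hagree t ⟨hu₁.1.trans ht.1, ht.2.le⟩)]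
    · -- p ≤ u₂ : the big envelope is affine with slope c from u₂ rightwards
      have rd2F : derivWithin (convEnv f a b) (Ici u₂) u₂ = c :=
        derivWithin_affine_piece (hu₂.2.trans hu₀r)
          (fun t ht => haff t ⟨hpu₂.trans ht.1, ht.2.le⟩)
      have key : ∀ v, v ∈ Ico a u₀ → p ≤ v →
          ∀ y ∈ (fun t => (convEnv f a u₀ t - convEnv f a u₀ v) / (t - v)) '' Ioc v u₀,
            c ≤ y := by
        rintro v hv hpv y ⟨t, ht, rfl⟩
        have hvmem : v ∈ Icc a u₀ := ⟨hv.1, hv.2.le⟩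
        have htmem : t ∈ Icc a u₀ := ⟨hv.1.trans ht.1.le, ht.2⟩
        have hFt : convEnv f a b t = convEnv f a b u₀ + c * (t - u₀) :=
          haff t ⟨hpv.trans ht.1.le, ht.2.trans hu₀r.le⟩
        have hFv : convEnv f a b v = convEnv f a b u₀ + c * (v - u₀) :=
          haff v ⟨hpv, hv.2.le.trans hu₀r.le⟩
        have hGt : convEnv f a b t ≤ convEnv f a u₀ t := GgeF t htmem
        rcases eq_or_lt_of_le hpv with rfl | hpv'
        · have hGv : convEnv f a u₀ p = convEnv f a b p := (hagree p ⟨hv.1, le_rfl⟩).symm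
          rw [le_div_iff₀ (by linarith [ht.1] : (0:ℝ) < t - p)]
          linarith [hGt, hGv, hFt, hFv]
        · have hpmem' : p ∈ Icc a u₀ := ⟨hp.1, hpv'.le.trans hv.2.le⟩
          have hsec := Gconv.secant_mono hvmem hpmem' htmem hpv'.ne ht.1.ne'
            (hpv'.le.trans ht.1.le)
          refine le_trans ?_ hsec
          rw [le_div_iff_of_neg (by linarith : p - v < 0)]
          have hGp : convEnv f a u₀ p = convEnv f a b p := (hagree p ⟨hp.1, le_rfl⟩).symm
          have hGv : convEnv f a b v ≤ convEnv f a u₀ v := GgeF v hvmem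
          have hFp : convEnv f a b p = convEnv f a b u₀ + c * (p - u₀) :=
            haff p ⟨le_rfl, (hpu₀.trans hu₀r).le⟩
          linarith [hGp, hGv, hFp, hFv]
      have hne₂ : ((fun t => (convEnv f a u₀ t - convEnv f a u₀ u₂) / (t - u₂)) ''
          Ioc u₂ u₀).Nonempty := ⟨_, mem_image_of_mem _ (right_mem_Ioc.2 hu₂.2)⟩
      have bdd₂ : BddBelow ((fun t => (convEnv f a u₀ t - convEnv f a u₀ u₂) / (t - u₂)) ''
          Ioc u₂ u₀) := ⟨c, key u₂ hu₂ hpu₂⟩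
      have rd2G : derivWithin (convEnv f a u₀) (Ici u₂) u₂ =
          sInf ((fun t => (convEnv f a u₀ t - convEnv f a u₀ u₂) / (t - u₂)) '' Ioc u₂ u₀) :=
        (hasDerivWithinAt_rightDeriv Gconv hu₂ bdd₂).derivWithin
          (uniqueDiffOn_Ici u₂ u₂ self_mem_Ici)
      have hc_le_d2 : c ≤ sInf ((fun t => (convEnv f a u₀ t - convEnv f a u₀ u₂) / (t - u₂)) ''
          Ioc u₂ u₀) := le_csInf hne₂ (key u₂ hu₂ hpu₂)
      rcases lt_or_ge u₁ p with hu₁p | hpu₁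
      · -- envelopes agree near u₁
        rw [derivWithin_congr_right hu₁p (fun t ht => hagree t ⟨hu₁.1.trans ht.1, ht.2.le⟩),
          rd2F, rd2G]
        linarith [hc_le_d2]
      · -- both points in the affine region
        have rd1F : derivWithin (convEnv f a b) (Ici u₁) u₁ = c :=
          derivWithin_affine_piece (hu₁.2.trans hu₀r)
            (fun t ht => haff t ⟨hpu₁.trans ht.1, ht.2.le⟩)
        have hne₁ : ((fun t => (convEnv f a u₀ t - convEnv f a u₀ u₁) / (t - u₁)) ''
            Ioc u₁ u₀).Nonempty := ⟨_, mem_image_of_mem _ (right_mem_Ioc.2 hu₁.2)⟩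
        have bdd₁ : BddBelow ((fun t => (convEnv f a u₀ t - convEnv f a u₀ u₁) / (t - u₁)) ''
            Ioc u₁ u₀) := ⟨c, key u₁ hu₁ hpu₁⟩
        have rd1G : derivWithin (convEnv f a u₀) (Ici u₁) u₁ =
            sInf ((fun t => (convEnv f a u₀ t - convEnv f a u₀ u₁) / (t - u₁)) '' Ioc u₁ u₀) :=
          (hasDerivWithinAt_rightDeriv Gconv hu₁ bdd₁).derivWithin
            (uniqueDiffOn_Ici u₁ u₁ self_mem_Ici)
        have hmid1 : sInf ((fun t => (convEnv f a u₀ t - convEnv f a u₀ u₁) / (t - u₁)) ''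
            Ioc u₁ u₀) ≤ (convEnv f a u₀ u₂ - convEnv f a u₀ u₁) / (u₂ - u₁) :=
          csInf_le bdd₁ (mem_image_of_mem _ ⟨h12, hu₂.2.le⟩)
        have hmid2 : (convEnv f a u₀ u₂ - convEnv f a u₀ u₁) / (u₂ - u₁) ≤
            sInf ((fun t => (convEnv f a u₀ t - convEnv f a u₀ u₂) / (t - u₂)) '' Ioc u₂ u₀) := by
          refine le_csInf hne₂ ?_
          rintro y ⟨t, ht, rfl⟩
          have hu₂mem : u₂ ∈ Icc a u₀ := ⟨hu₂.1, hu₂.2.le⟩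
          have hu₁mem : u₁ ∈ Icc a u₀ := ⟨hu₁.1, hu₁.2.le⟩
          have htmem : t ∈ Icc a u₀ := ⟨hu₂.1.trans ht.1.le, ht.2⟩
          have hsec := Gconv.secant_mono hu₂mem hu₁mem htmem h12.ne ht.1.ne'
            (h12.le.trans ht.1.le)
          refine le_trans (le_of_eq ?_) hsec
          rw [div_eq_div_iff (by linarith : u₂ - u₁ ≠ 0) (by linarith : u₁ - u₂ ≠ 0)]
          ring
        rw [rd2F, rd1F, rd2G, rd1G]
        linarith [hmid1, hmid2]
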